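/- Let Σ_x be a real n×n positive semidefinite matrix, Φ a real ℓ×n matrix, and Σ := Σ_x^{1/2}·Φᵀ·Φ·Σ_x^{1/2}. Then lim_{σ²→0⁺} MMSE(σ²) = tr(Σ_x·P), where P is the matrix of the orthogonal projection of ℝⁿ (with the Euclidean inner product) onto the subspace ker(Σ) ∩ (ker Σ_x)^⊥, kernels being taken of the linear maps given by matrix-vector multiplication. -/

import Mathlib

/-!
Put `S = Σ_x^{1/2}` and `Σ = S Φᵀ Φ S`. The push-through identity
`S Φᵀ (σ² + Φ Σ_x Φᵀ)⁻¹ = (σ² + Σ)⁻¹ S Φᵀ` turns `MMSE(σ²)` into `tr (Σ_x · σ² (σ² + Σ)⁻¹)`.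
In the functional calculus of `Σ`, the matrix `σ² (σ² + Σ)⁻¹` is `x ↦ σ² / (σ² + x)`, which tends
to the indicator of `{0}` on the nonnegative spectrum, so it converges to the orthogonal projection
`R` onto `ker Σ`. As `ker Σ_x ⊆ ker Σ`, the space `ker Σ` is the orthogonal sum of
`K = ker Σ ∩ (ker Σ_x)ᗮ` and `ker Σ_x`; hence `R - P` maps into `ker Σ_x` and `Σ_x R = Σ_x P`.
-/

open Matrix Filter Topology

/-- The positive semidefinite square root of a positive semidefinite matrix
(Mathlib's former `Matrix.PosSemidef.sqrt`, removed since; restored with its old definition). -/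
noncomputable def Matrix.PosSemidef.sqrt {n : Type*} [Fintype n] [DecidableEq n]
    {A : Matrix n n ℝ} (hA : A.PosSemidef) : Matrix n n ℝ :=
  hA.1.eigenvectorUnitary.1 * diagonal ((RCLike.ofReal : ℝ → ℝ) ∘ (√·) ∘ hA.1.eigenvalues) *
  (star hA.1.eigenvectorUnitary : Matrix n n ℝ)

open scoped MatrixOrder

lemma tendsto_div_add_nhdsGT_zero {μ : ℝ} (hμ : 0 ≤ μ) :
    Tendsto (fun σ : ℝ => σ / (σ + μ)) (𝓝[>] 0) (𝓝 (if μ = 0 then 1 else 0)) := by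
  rcases hμ.eq_or_lt with rfl | hμ
  · refine tendsto_const_nhds.congr' ?_
    filter_upwards [self_mem_nhdsWithin] with σ hσ
    simp [div_self (ne_of_gt (Set.mem_Ioi.mp hσ))]
  · have : ContinuousAt (fun σ : ℝ => σ / (σ + μ)) 0 :=
      continuousAt_id.div (continuousAt_id.add continuousAt_const) (by simpa using hμ.ne')
    simpa [hμ.ne'] using this.tendsto.mono_left nhdsWithin_le_nhds

namespace Submodule

variable {𝕜 E : Type*} [RCLike 𝕜] [NormedAddCommGroup E] [InnerProductSpace 𝕜 E]

lemma starProjection_sub_starProjection_mem_inf_orthogonal {K W : Submodule 𝕜 E}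
    [K.HasOrthogonalProjection] [W.HasOrthogonalProjection] (h : K ≤ W) (v : E) :
    W.starProjection v - K.starProjection v ∈ W ⊓ Kᗮ := by
  refine ⟨W.sub_mem (W.starProjection_apply_mem v) (h (K.starProjection_apply_mem v)), ?_⟩
  rw [← sub_sub_sub_cancel_left _ _ v]
  exact Kᗮ.sub_mem (K.sub_starProjection_mem_orthogonal v)
    (orthogonal_le h (W.sub_starProjection_mem_orthogonal v))

lemma inf_orthogonal_inf_orthogonal_eq_of_le [FiniteDimensional 𝕜 E] {V W : Submodule 𝕜 E}
    (h : V ≤ W) : W ⊓ (W ⊓ Vᗮ)ᗮ = V := by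
  have hWV : W ⊓ Vᗮ = (Wᗮ ⊔ V)ᗮ := by rw [← inf_orthogonal, orthogonal_orthogonal]
  rw [hWV, orthogonal_orthogonal, ← inf_sup_assoc_of_le _ h, inf_orthogonal_eq_bot, bot_sup_eq]

lemma starProjection_sub_starProjection_inf_orthogonal_mem [FiniteDimensional 𝕜 E]
    {V W : Submodule 𝕜 E} (h : V ≤ W) (v : E) :
    W.starProjection v - (W ⊓ Vᗮ).starProjection v ∈ V := by
  have hmem := starProjection_sub_starProjection_mem_inf_orthogonal (inf_le_left : W ⊓ Vᗮ ≤ W) v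
  rwa [inf_orthogonal_inf_orthogonal_eq_of_le h] at hmem

end Submodule

namespace Matrix

section PushThrough

variable {R m k : Type*} [CommRing R] [Fintype m] [DecidableEq m] [Fintype k] [DecidableEq k]

lemma mul_inv_smul_one_add_mul_comm (X : Matrix m k R) (Y : Matrix k m R) (c : R)
    (hXY : IsUnit (c • 1 + X * Y).det) (hYX : IsUnit (c • 1 + Y * X).det) :
    X * (c • 1 + Y * X)⁻¹ = (c • 1 + X * Y)⁻¹ * X := by
  have hcomm : (c • 1 + X * Y) * X = X * (c • 1 + Y * X) := by
    simp only [Matrix.add_mul, Matrix.mul_add, Matrix.smul_mul, Matrix.mul_smul, Matrix.one_mul,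
      Matrix.mul_one, Matrix.mul_assoc]
  calc X * (c • 1 + Y * X)⁻¹
      = (c • 1 + X * Y)⁻¹ * ((c • 1 + X * Y) * X) * (c • 1 + Y * X)⁻¹ := by
        rw [nonsing_inv_mul_cancel_left _ _ hXY]
    _ = (c • 1 + X * Y)⁻¹ * X := by
        rw [hcomm, ← Matrix.mul_assoc, mul_nonsing_inv_cancel_right _ _ hYX]

lemma smul_inv_smul_one_add_eq_sub (Z : Matrix m m R) (c : R) (h : IsUnit (c • 1 + Z).det) :
    c • (c • 1 + Z)⁻¹ = 1 - (c • 1 + Z)⁻¹ * Z := by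
  rw [eq_sub_iff_add_eq]
  calc c • (c • 1 + Z)⁻¹ + (c • 1 + Z)⁻¹ * Z = (c • 1 + Z)⁻¹ * (c • 1 + Z) := by
        rw [Matrix.mul_add, Matrix.mul_smul, Matrix.mul_one]
    _ = 1 := nonsing_inv_mul _ h

variable {n : Type*} [Fintype n] [DecidableEq n]

lemma sub_mul_inv_mul_eq_mul_smul_inv_mul {Sx S : Matrix n n R} (hS : S * S = Sx)
    (Ψ : Matrix n m R) (Φ : Matrix m n R) (c : R)
    (hA : IsUnit (c • 1 + Φ * Sx * Ψ).det) (hB : IsUnit (c • 1 + S * Ψ * Φ * S).det) :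
    Sx - Sx * Ψ * (c • 1 + Φ * Sx * Ψ)⁻¹ * Φ * Sx = S * (c • (c • 1 + S * Ψ * Φ * S)⁻¹) * S := by
  subst hS
  have hpush : S * Ψ * (c • 1 + Φ * S * (S * Ψ))⁻¹ = (c • 1 + S * Ψ * (Φ * S))⁻¹ * (S * Ψ) :=
    mul_inv_smul_one_add_mul_comm _ _ c (by simpa only [Matrix.mul_assoc] using hB)
      (by simpa only [Matrix.mul_assoc] using hA)
  rw [smul_inv_smul_one_add_eq_sub _ _ hB]
  calc S * S - S * S * Ψ * (c • 1 + Φ * (S * S) * Ψ)⁻¹ * Φ * (S * S)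
      = S * (1 - S * Ψ * (c • 1 + Φ * S * (S * Ψ))⁻¹ * Φ * S) * S := by
        simp only [Matrix.mul_sub, Matrix.sub_mul, Matrix.mul_one, Matrix.mul_assoc]
    _ = S * (1 - (c • 1 + S * Ψ * Φ * S)⁻¹ * (S * Ψ * Φ * S)) * S := by
        rw [hpush]
        simp only [Matrix.mul_assoc]

end PushThrough

lemma PosSemidef.posDef_smul_one_add {ι : Type*} [DecidableEq ι] {M : Matrix ι ι ℝ}
    (hM : M.PosSemidef) {c : ℝ} (hc : 0 < c) : (c • 1 + M).PosDef :=
  (PosDef.one.smul hc).add_posSemidef hM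

lemma IsHermitian.posSemidef_mul_transpose_mul_mul {ι κ : Type*} [Fintype ι] [Fintype κ]
    {S : Matrix ι ι ℝ} (hS : S.IsHermitian) (Φ : Matrix κ ι ℝ) :
    (S * Φᵀ * Φ * S).PosSemidef := by
  simpa [← conjTranspose_eq_transpose_of_trivial, hS.eq, Matrix.mul_assoc]
    using posSemidef_conjTranspose_mul_self (Φ * S)

section PositiveSemidefinite

variable {ι : Type*} [Fintype ι] [DecidableEq ι]

lemma PosSemidef.sqrt_eq_cfc {A : Matrix ι ι ℝ} (hA : A.PosSemidef) :
    hA.sqrt = cfc Real.sqrt A := by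
  rw [hA.1.cfc_eq, IsHermitian.cfc, Unitary.conjStarAlgAut_apply]
  rfl

lemma PosSemidef.sqrt_mul_sqrt {A : Matrix ι ι ℝ} (hA : A.PosSemidef) :
    hA.sqrt * hA.sqrt = A := by
  rw [hA.sqrt_eq_cfc, ← cfc_mul ..]
  conv_rhs => rw [← cfc_id' ℝ A]
  exact cfc_congr fun x hx => Real.mul_self_sqrt (spectrum_nonneg_of_nonneg hA.nonneg hx)

lemma PosSemidef.isHermitian_sqrt {A : Matrix ι ι ℝ} (hA : A.PosSemidef) :
    hA.sqrt.IsHermitian := by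
  rw [hA.sqrt_eq_cfc]
  exact cfc_predicate Real.sqrt A

open scoped ComplexOrder in
lemma ker_toEuclideanLin_conjTranspose_mul_self {𝕜 : Type*} [RCLike 𝕜] (A : Matrix ι ι 𝕜) :
    LinearMap.ker (toEuclideanLin (Aᴴ * A)) = LinearMap.ker (toEuclideanLin A) := by
  ext v
  simpa [toLpLin_apply] using conjTranspose_mul_self_mulVec_eq_zero A v.ofLp

lemma IsHermitian.ker_toEuclideanLin_mul_self_le {𝕜 κ : Type*} [RCLike 𝕜] {S : Matrix ι ι 𝕜}
    (hS : S.IsHermitian) (B : Matrix κ ι 𝕜) :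
    LinearMap.ker (toEuclideanLin (S * S)) ≤ LinearMap.ker (toEuclideanLin (B * S)) := by
  nth_rewrite 1 [← hS.eq]
  rw [ker_toEuclideanLin_conjTranspose_mul_self, toLpLin_mul_same]
  exact LinearMap.ker_le_ker_comp _ _

lemma PosSemidef.trace_sub_mul_inv_mul {κ : Type*} [Fintype κ] [DecidableEq κ]
    {Sx : Matrix ι ι ℝ} (hSx : Sx.PosSemidef) (Φ : Matrix κ ι ℝ) {c : ℝ} (hc : 0 < c) :
    (Sx - Sx * Φᵀ * (c • 1 + Φ * Sx * Φᵀ)⁻¹ * Φ * Sx).trace =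
      (Sx * (c • (c • 1 + hSx.sqrt * Φᵀ * Φ * hSx.sqrt)⁻¹)).trace := by
  have hA : (c • 1 + Φ * Sx * Φᵀ).PosDef := by
    simpa using (hSx.mul_mul_conjTranspose_same Φ).posDef_smul_one_add hc
  have hB := (hSx.isHermitian_sqrt.posSemidef_mul_transpose_mul_mul Φ).posDef_smul_one_add hc
  rw [sub_mul_inv_mul_eq_mul_smul_inv_mul hSx.sqrt_mul_sqrt Φᵀ Φ c hA.det_pos.ne'.isUnit
    hB.det_pos.ne'.isUnit, trace_mul_cycle, hSx.sqrt_mul_sqrt]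

lemma IsHermitian.tendsto_cfc {𝕜 X : Type*} [RCLike 𝕜] {l : Filter X} {A : Matrix ι ι 𝕜}
    (hA : A.IsHermitian) {F : X → ℝ → ℝ} {f : ℝ → ℝ}
    (h : ∀ x ∈ spectrum ℝ A, Tendsto (F · x) l (𝓝 (f x))) :
    Tendsto (fun t => cfc (F t) A) l (𝓝 (cfc f A)) := by
  simp only [hA.cfc_eq, IsHermitian.cfc, Unitary.conjStarAlgAut_apply]
  refine (continuous_const.matrix_mul continuous_id.matrix_diagonal).matrix_mul continuous_const
    |>.tendsto _ |>.comp (tendsto_pi_nhds.mpr fun i => ?_)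
  exact (RCLike.continuous_ofReal.tendsto _).comp (h _ (hA.eigenvalues_mem_spectrum_real i))

lemma PosSemidef.smul_inv_smul_one_add_eq_cfc {M : Matrix ι ι ℝ} (hM : M.PosSemidef) {c : ℝ}
    (hc : 0 < c) : c • (c • 1 + M)⁻¹ = cfc (fun x => c / (c + x)) M := by
  have hunit : IsUnit (c • 1 + M).det := (hM.posDef_smul_one_add hc).det_pos.ne'.isUnit
  have hshift : c • 1 + M = cfc (fun x => c + x) M := by
    rw [cfc_const_add c (fun x => x) M, cfc_id' ℝ M, Algebra.algebraMap_eq_smul_one]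
  have hprod : cfc (fun x => c / (c + x)) M * (c • 1 + M) = c • 1 := by
    rw [hshift, ← cfc_mul _ _ M (M.finite_real_spectrum.continuousOn _),
      ← Algebra.algebraMap_eq_smul_one, ← cfc_const c M]
    exact cfc_congr fun x hx =>
      div_mul_cancel₀ c (add_pos_of_pos_of_nonneg hc (spectrum_nonneg_of_nonneg hM.nonneg hx)).ne'
  calc c • (c • 1 + M)⁻¹ = c • 1 * (c • 1 + M)⁻¹ := by rw [Matrix.smul_mul, Matrix.one_mul]
    _ = cfc (fun x => c / (c + x)) M * (c • 1 + M) * (c • 1 + M)⁻¹ := by rw [hprod]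
    _ = cfc (fun x => c / (c + x)) M := mul_nonsing_inv_cancel_right _ _ hunit

lemma PosSemidef.tendsto_smul_inv_smul_one_add {M : Matrix ι ι ℝ} (hM : M.PosSemidef) :
    Tendsto (fun c : ℝ => c • (c • 1 + M)⁻¹) (𝓝[>] 0)
      (𝓝 (cfc (fun x : ℝ => if x = 0 then 1 else 0) M)) := by
  refine (hM.1.tendsto_cfc fun x hx => tendsto_div_add_nhdsGT_zero
    (spectrum_nonneg_of_nonneg hM.nonneg hx)).congr' ?_
  filter_upwards [self_mem_nhdsWithin] with c hc
  exact (hM.smul_inv_smul_one_add_eq_cfc hc).symm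

lemma IsHermitian.toEuclideanLin_cfc_eq_starProjection_ker {𝕜 : Type*} [RCLike 𝕜]
    {A : Matrix ι ι 𝕜} (hA : A.IsHermitian) (v : EuclideanSpace 𝕜 ι) :
    toEuclideanLin (cfc (fun x : ℝ => if x = 0 then 1 else 0) A) v =
      (LinearMap.ker (toEuclideanLin A)).starProjection v := by
  set Q := cfc (fun x : ℝ => if x = 0 then 1 else 0) A
  have hfin := A.finite_real_spectrum
  have hAQ : A * Q = 0 := by
    calc A * Q = cfc (fun x : ℝ => x) A * Q := by rw [cfc_id' ℝ A]
      _ = cfc (fun x : ℝ => x * if x = 0 then 1 else 0) A :=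
          (cfc_mul _ _ A continuousOn_id (hfin.continuousOn _)).symm
      _ = 0 := by
          rw [← cfc_zero ℝ A]
          exact cfc_congr fun x _ => by split_ifs <;> simp_all
  -- `x⁻¹ * x = 1 - (if x = 0 then 1 else 0)` because `0⁻¹ = 0`.
  have hQ_add : Q + cfc (fun x : ℝ => x⁻¹) A * A = 1 := by
    calc Q + cfc (fun x : ℝ => x⁻¹) A * A
        = Q + cfc (fun x : ℝ => x⁻¹) A * cfc (fun x : ℝ => x) A := by rw [cfc_id' ℝ A]
      _ = cfc (fun x : ℝ => (if x = 0 then 1 else 0) + x⁻¹ * x) A := by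
          rw [← cfc_mul (fun x : ℝ => x⁻¹) (fun x : ℝ => x) A (hfin.continuousOn _) continuousOn_id,
            ← cfc_add A _ _ (hfin.continuousOn _) (hfin.continuousOn _)]
      _ = 1 := by
          rw [← cfc_one ℝ A]
          exact cfc_congr fun x _ => by by_cases hx : x = 0 <;> simp [hx]
  have hQsymm : (toEuclideanLin Q).IsSymmetric :=
    isSymmetric_toEuclideanLin_iff.mpr (cfc_predicate _ A)
  symm
  refine Submodule.eq_starProjection_of_mem_of_inner_eq_zero ?_ fun w hw => ?_
  · rw [LinearMap.mem_ker, ← LinearMap.comp_apply, ← toLpLin_mul_same, hAQ, map_zero,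
      LinearMap.zero_apply]
  · have hQw : toEuclideanLin Q w = w := by
      have := congrArg (fun B => toEuclideanLin B w) hQ_add
      simp only [map_add, toLpLin_mul_same, LinearMap.add_apply, LinearMap.comp_apply] at this
      rw [LinearMap.mem_ker.mp hw, map_zero, add_zero, toLpLin_one, LinearMap.id_apply] at this
      exact this
    rw [inner_sub_left, hQsymm, hQw, sub_self]

end PositiveSemidefinite

end Matrix

/-- lim_{σ²→0⁺} MMSE(σ²) = tr(Σ_x·P), where P is the matrix of the orthogonal
projection of ℝⁿ onto ker(Σ) ∩ (ker Σ_x)^⊥, with Σ = Σ_x^{1/2}·Φᵀ·Φ·Σ_x^{1/2}. -/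
theorem stmt_2 {n l : ℕ} (Sx : Matrix (Fin n) (Fin n) ℝ) (hSx : Sx.PosSemidef)
    (Φ : Matrix (Fin l) (Fin n) ℝ)
    (K : Submodule ℝ (EuclideanSpace ℝ (Fin n)))
    (hK : K = LinearMap.ker (Matrix.toEuclideanLin (hSx.sqrt * Φᵀ * Φ * hSx.sqrt))
      ⊓ (LinearMap.ker (Matrix.toEuclideanLin Sx))ᗮ)
    (P : Matrix (Fin n) (Fin n) ℝ)
    (hP : ∀ v : EuclideanSpace ℝ (Fin n),
      Matrix.toEuclideanLin P v = (K.orthogonalProjectionOnto v : EuclideanSpace ℝ (Fin n))) :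
    Tendsto (fun σ2 : ℝ =>
        (Sx - Sx * Φᵀ * (σ2 • (1 : Matrix (Fin l) (Fin l) ℝ) + Φ * Sx * Φᵀ)⁻¹ * Φ * Sx).trace)
      (nhdsWithin 0 (Set.Ioi 0)) (nhds ((Sx * P).trace)) := by
  set S := hSx.sqrt
  have hSg : (S * Φᵀ * Φ * S).PosSemidef := hSx.isHermitian_sqrt.posSemidef_mul_transpose_mul_mul Φ
  have hker : LinearMap.ker (toEuclideanLin Sx) ≤ LinearMap.ker (toEuclideanLin (S * Φᵀ * Φ * S)) :=
    hSx.sqrt_mul_sqrt ▸ hSx.isHermitian_sqrt.ker_toEuclideanLin_mul_self_le _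
  have hSxP : Sx * cfc (fun x : ℝ => if x = 0 then 1 else 0) (S * Φᵀ * Φ * S) = Sx * P := by
    refine toEuclideanLin.injective (LinearMap.ext fun v => ?_)
    rw [toLpLin_mul_same, toLpLin_mul_same, LinearMap.comp_apply, LinearMap.comp_apply, hP,
      hSg.1.toEuclideanLin_cfc_eq_starProjection_ker, ← Submodule.starProjection_apply,
      ← sub_eq_zero, ← map_sub, ← LinearMap.mem_ker, hK]
    exact Submodule.starProjection_sub_starProjection_inf_orthogonal_mem hker v
  rw [← hSxP]
  refine Tendsto.congr' (eventually_nhdsWithin_of_forall fun c hc =>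
    (hSx.trace_sub_mul_inv_mul Φ hc).symm) ?_
  exact ((continuous_const.matrix_mul continuous_id).matrix_trace.tendsto _).comp
    hSg.tendsto_smul_inv_smul_one_add
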